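/- arXiv:0803.0156 — 4 statements merged into one kernel-verified Lean document; each statement's English description precedes it below -/
import Mathlib

section
/- Consider a deck with s₁ cards of value 1 and s₂ cards of value 2, uniformly shuffled, with s₁ ≥ s₂ ≥ 0. The player plays m = b₁ + b₂ ≤ s₁ + s₂ rounds, naming value 1 in b₁ rounds and value 2 in b₂ rounds (in any order), and loses if any named value coincides with the drawn card in that round. Then the probability of winning equals C(s₁+s₂-b₁-b₂, s₁-b₂) / C(s₁+s₂, s₁); in particular it is nonzero if and only if b₁ ≤ s₂ and b₂ ≤ s₁. -/
/-!
Condition on the first card. Grouping the orderings of a deck by their first card shows that the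
number `N(bids; s₁, s₂)` of orderings of the `(s₁, s₂)`-deck survived by the bid schedule satisfies
`N(1 :: bs; s₁, s₂) = s₂ · N(bs; s₁, s₂ - 1)` and `N(2 :: bs; s₁, s₂) = s₁ · N(bs; s₁ - 1, s₂)`,
which `s₁! s₂! · C(s₁ + s₂ - m, s₁ - b₂)` solves. Dividing by `(s₁ + s₂)! = C(s₁ + s₂, s₁) s₁! s₂!`
gives the formula, and the binomial coefficient is positive exactly when
`0 ≤ s₁ - b₂ ≤ s₁ + s₂ - m`, i.e. when `b₂ ≤ s₁` and `b₁ ≤ s₂`.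
-/

/-- The deck of composition `s` as a list of card values:
`s[i]` copies of value `i+1`, in a canonical order. -/
def deckList (s : List ℕ) : List ℕ :=
  (List.range s.length).flatMap fun i => List.replicate (s.getD i 0) (i + 1)

/-- `winsAux strat hist m d = true` iff the player using adaptive strategy `strat`
(a function from the list of previously revealed cards to the next bid)
survives `m` rounds when the remaining deck order is `d`, having already seen `hist`. -/
def winsAux (strat : List ℕ → ℕ) : List ℕ → ℕ → List ℕ → Bool
  | _, 0, _ => true
  | _, _ + 1, [] => true
  | hist, m + 1, c :: rest =>
      (strat hist != c) && winsAux strat (hist ++ [c]) m rest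

/-- Probability that strategy `strat` wins the `m`-round game against the uniformly
shuffled `s`-deck: the fraction of the `c!` orderings of the deck on which it wins. -/
def winProb (strat : List ℕ → ℕ) (s : List ℕ) (m : ℕ) : ℚ :=
  (((deckList s).permutations.countP fun d => winsAux strat [] m d) : ℚ)
    / ((deckList s).length.factorial : ℚ)

/-- Number of cards of value `i` remaining from the `s`-deck after the cards in `hist`
have been dealt. -/
def remCount (s : List ℕ) (hist : List ℕ) (i : ℕ) : ℕ :=
  s.getD (i - 1) 0 - hist.count i

/-- The canonical greedy strategy for the `s`-deck: name a least frequent remaining value. -/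
def greedyStrat (s : List ℕ) (hist : List ℕ) : ℕ :=
  (((List.range' 1 s.length)).argmin (remCount s hist)).getD 1

/-- `g m s`: the probability that the greedy strategy wins the `m`-round `s`-game. -/
def g (m : ℕ) (s : List ℕ) : ℚ :=
  winProb (greedyStrat s) s m

/-- `gFull s`: greedy winning probability when all cards are dealt. -/
def gFull (s : List ℕ) : ℚ :=
  g (deckList s).length s

/-- The strategy naming, in order, value `1` `b 1` times, value `2` `b 2` times, etc. -/
def bidStrat (b : List ℕ) (hist : List ℕ) : ℕ :=
  (deckList b).getD hist.length 0

/-- `advProb b s`: winning probability of the advance bid vector `b` against the `s`-deck. -/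
def advProb (b s : List ℕ) : ℚ :=
  winProb (bidStrat b) s b.sum

/-- `s` majorizes `q`: every partial sum of `s` is at least that of `q`. -/
def Majorizes (s q : List ℕ) : Prop :=
  ∀ i, (q.take i).sum ≤ (s.take i).sum

/-- `Pfun s q = ∏_{i : sᵢ > qᵢ} sᵢ (sᵢ-1) ⋯ (qᵢ+1) = ∏_{i : sᵢ > qᵢ} sᵢ!/qᵢ!`. -/
def Pfun (s q : List ℕ) : ℕ :=
  (List.zipWith (fun a b => if b < a then a.factorial / b.factorial else 1) s q).prod

/-- `s` with its `i`-th entry decreased by `1`, re-sorted non-increasingly. -/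
def downAt (s : List ℕ) (i : ℕ) : List ℕ :=
  ((s.set i (s.getD i 0 - 1)).mergeSort fun a b => decide (b ≤ a))

/-- `strat` plays greedily at position `hist`. -/
def GreedyAt (s : List ℕ) (strat : List ℕ → ℕ) (hist : List ℕ) : Prop :=
  strat hist ∈ List.range' 1 s.length ∧
    ∀ j ∈ List.range' 1 s.length, remCount s hist (strat hist) ≤ remCount s hist j

/-- `strat` plays anti-greedily at `hist`: it names a most frequent remaining value. -/
def AntiGreedyAt (s : List ℕ) (strat : List ℕ → ℕ) (hist : List ℕ) : Prop :=
  strat hist ∈ List.range' 1 s.length ∧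
    ∀ j ∈ List.range' 1 s.length, remCount s hist j ≤ remCount s hist (strat hist)

/-- `hist` is a position reachable with positive probability by `strat` in the `m`-round
`s`-game: it is part of the deck, fewer than `m` cards have been dealt, and `strat`
survived all rounds so far. -/
def Reachable (strat : List ℕ → ℕ) (s : List ℕ) (m : ℕ) (hist : List ℕ) : Prop :=
  hist.length < m ∧ List.Subperm hist (deckList s) ∧ winsAux strat [] hist.length hist = true

/-- Binomial coefficient with integer lower index (zero when the lower index is negative). -/
def zchoose (n : ℕ) (k : ℤ) : ℕ :=
  if 0 ≤ k then n.choose k.toNat else 0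

open List
open scoped Nat

section Permutations

variable {α : Type*} [DecidableEq α]

theorem List.erase_cons_perm {a t : α} {l : List α} (ha : a ∈ l) :
    (t :: l).erase a ~ t :: l.erase a := by
  by_cases h : t = a
  · subst h
    simpa using perm_cons_erase ha
  · simp [h]

theorem List.permutations'_perm_flatMap_erase : ∀ {l : List α}, l ≠ [] →
    l.permutations' ~ l.flatMap fun a => (l.erase a).permutations'.map (a :: ·)
  | [], h => absurd rfl h
  | [t], _ => by simp [permutations']
  | t :: u :: rest, _ => by
    set l := u :: rest
    have ih := permutations'_perm_flatMap_erase (l := l) (cons_ne_nil _ _)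
    -- `permutations'Aux t (a :: r)` is `t :: a :: r` followed by the insertions of `t` into `r`,
    -- each prefixed by `a`.
    calc (t :: l).permutations'
        = l.permutations'.flatMap (permutations'Aux t) := rfl
      _ ~ (l.flatMap fun a => (l.erase a).permutations'.map (a :: ·)).flatMap
            (permutations'Aux t) := ih.flatMap_right _
      _ ~ l.flatMap fun a => ((l.erase a).permutations'.map (a :: ·)).map (t :: ·) ++
            (t :: l.erase a).permutations'.map (a :: ·) := by
        simp only [flatMap_assoc, flatMap_map, permutations'Aux]
        refine Perm.flatMap_left _ fun a _ => ?_
        refine (map_append_flatMap_perm _ _ _).symm.trans (Perm.of_eq ?_)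
        simp [map_flatMap, permutations']
      _ ~ (l.flatMap fun a => (l.erase a).permutations'.map (a :: ·)).map (t :: ·) ++
            l.flatMap fun a => ((t :: l).erase a).permutations'.map (a :: ·) := by
        rw [map_flatMap]
        refine (flatMap_append_perm _ _ _).symm.trans (Perm.append_left _ ?_)
        exact Perm.flatMap_left _ fun a ha => ((erase_cons_perm ha).permutations').symm.map _
      _ ~ l.permutations'.map (t :: ·) ++
            l.flatMap fun a => ((t :: l).erase a).permutations'.map (a :: ·) :=
        (ih.symm.map _).append_right _
      _ = (t :: l).flatMap fun a => ((t :: l).erase a).permutations'.map (a :: ·) := by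
        rw [flatMap_cons (xs := l), erase_cons_head]

theorem List.countP_permutations_eq_sum_erase {l : List α} (hl : l ≠ [])
    (p : List α → Bool) :
    l.permutations.countP p
      = (l.map fun a => (l.erase a).permutations.countP fun r => p (a :: r)).sum := by
  rw [(permutations_perm_permutations' l).countP_eq,
    (permutations'_perm_flatMap_erase hl).countP_eq, countP_flatMap]
  refine congrArg sum (map_congr_left fun a _ => ?_)
  rw [Function.comp_apply, countP_map, (permutations_perm_permutations' _).countP_eq]
  rfl

end Permutations

def scheduled (bids : List ℕ) (hist : List ℕ) : ℕ :=
  bids.getD hist.length 0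

theorem winsAux_eq_winsAux_nil (strat : List ℕ → ℕ) :
    ∀ (hist : List ℕ) (m : ℕ) (d : List ℕ),
      winsAux strat hist m d = winsAux (fun h => strat (hist ++ h)) [] m d
  | _, 0, _ => by simp only [winsAux]
  | _, _ + 1, [] => by simp only [winsAux]
  | hist, m + 1, c :: r => by
    rw [winsAux, winsAux, winsAux_eq_winsAux_nil strat, winsAux_eq_winsAux_nil _ ([] ++ [c])]
    simp [append_assoc]

theorem winsAux_scheduled_cons (b : ℕ) (bs : List ℕ) (m c : ℕ) (r : List ℕ) :
    winsAux (scheduled (b :: bs)) [] (m + 1) (c :: r)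
      = ((b != c) && winsAux (scheduled bs) [] m r) := by
  rw [winsAux, winsAux_eq_winsAux_nil]
  rfl

theorem zchoose_eq_zero_of_neg {n : ℕ} {k : ℤ} (hk : k < 0) : zchoose n k = 0 :=
  if_neg (not_le.2 hk)

theorem zchoose_eq_zero_of_lt {n : ℕ} {k : ℤ} (hk : (n : ℤ) < k) : zchoose n k = 0 := by
  unfold zchoose
  split_ifs
  · exact Nat.choose_eq_zero_of_lt (by omega)
  · rfl

theorem zchoose_pos_iff {n : ℕ} {k : ℤ} : 0 < zchoose n k ↔ 0 ≤ k ∧ k ≤ n := by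
  unfold zchoose
  split_ifs with hk
  · rw [pos_iff_ne_zero, Nat.choose_ne_zero_iff]
    omega
  · omega

theorem deckList_pair (s₁ s₂ : ℕ) : deckList [s₁, s₂] = replicate s₁ 1 ++ replicate s₂ 2 := by
  simp [deckList, List.range_succ]

theorem deckList_pair_erase_one (s₁ s₂ : ℕ) :
    (deckList [s₁, s₂]).erase 1 = deckList [s₁ - 1, s₂] := by
  cases s₁ <;> simp [deckList_pair, erase_append]

theorem deckList_pair_erase_two (s₁ s₂ : ℕ) :
    (deckList [s₁, s₂]).erase 2 = deckList [s₁, s₂ - 1] := by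
  simp [deckList_pair, erase_append]

theorem countP_permutations_deckList_pair_scheduled_cons (b : ℕ) (bs : List ℕ) {s₁ s₂ : ℕ}
    (hs : 0 < s₁ + s₂) :
    (deckList [s₁, s₂]).permutations.countP (winsAux (scheduled (b :: bs)) [] (bs.length + 1))
      = s₁ * (deckList [s₁ - 1, s₂]).permutations.countP
            (fun d => (b != 1) && winsAux (scheduled bs) [] bs.length d)
        + s₂ * (deckList [s₁, s₂ - 1]).permutations.countP
            (fun d => (b != 2) && winsAux (scheduled bs) [] bs.length d) := by
  have hdeck : deckList [s₁, s₂] ≠ [] := by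
    rw [deckList_pair, ne_eq, append_eq_nil_iff, replicate_eq_nil_iff, replicate_eq_nil_iff]
    omega
  rw [countP_permutations_eq_sum_erase hdeck, ← deckList_pair_erase_one,
    ← deckList_pair_erase_two]
  simp only [winsAux_scheduled_cons]
  rw [deckList_pair, map_append, map_replicate, map_replicate, sum_append, sum_replicate,
    sum_replicate, smul_eq_mul, smul_eq_mul]

theorem countP_permutations_deckList_pair_scheduled : ∀ (bids : List ℕ),
    (∀ x ∈ bids, x = 1 ∨ x = 2) → ∀ {s₁ s₂ : ℕ}, bids.length ≤ s₁ + s₂ →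
    (deckList [s₁, s₂]).permutations.countP (winsAux (scheduled bids) [] bids.length)
      = s₁ ! * s₂ ! * zchoose (s₁ + s₂ - bids.length) (s₁ - bids.count 2)
  | [], _, s₁, s₂, _ => by
    rw [length_nil, countP_eq_length.2 fun d _ => by rw [winsAux], length_permutations,
      deckList_pair, length_append, length_replicate, length_replicate, count_nil, tsub_zero,
      Nat.cast_zero, sub_zero, zchoose, if_pos (Int.natCast_nonneg _), Int.toNat_natCast,
      ← Nat.choose_mul_factorial_mul_factorial (Nat.le_add_right s₁ s₂), add_tsub_cancel_left]
    ring
  | b :: bs, hvals, s₁, s₂, hlen => by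
    rw [length_cons] at hlen ⊢
    have ih : ∀ {t₁ t₂ : ℕ}, bs.length ≤ t₁ + t₂ → _ := fun h =>
      countP_permutations_deckList_pair_scheduled bs
        (fun x hx => hvals x (mem_cons_of_mem _ hx)) h
    rw [countP_permutations_deckList_pair_scheduled_cons b bs (by omega)]
    rcases hvals b mem_cons_self with rfl | rfl
    · simp only [bne_self_eq_false, Bool.false_and, countP_false, Function.const_apply, mul_zero,
        Nat.reduceBNe, Bool.true_and, zero_add, ne_eq, OfNat.one_ne_ofNat, not_false_eq_true,
        count_cons_of_ne]
      rcases Nat.eq_zero_or_pos s₂ with rfl | hs₂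
      · have := count_le_length (a := 2) (l := bs)
        rw [zchoose_eq_zero_of_lt (by omega), mul_zero, zero_mul]
      · rw [ih (by omega), ← Nat.mul_factorial_pred hs₂.ne',
          show s₁ + (s₂ - 1) - bs.length = s₁ + s₂ - (bs.length + 1) by omega]
        ring
    · simp only [Nat.reduceBNe, Bool.true_and, bne_self_eq_false, Bool.false_and, countP_false,
        Function.const_apply, mul_zero, add_zero, count_cons_self, Nat.cast_add, Nat.cast_one]
      rcases Nat.eq_zero_or_pos s₁ with rfl | hs₁
      · rw [zchoose_eq_zero_of_neg (by omega), mul_zero, zero_mul]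
      · rw [ih (by omega), ← Nat.mul_factorial_pred hs₁.ne', Nat.cast_sub hs₁,
          show s₁ - 1 + s₂ - bs.length = s₁ + s₂ - (bs.length + 1) by omega, Nat.cast_one,
          sub_sub, add_comm 1]
        ring

theorem winProb_scheduled_pair (bids : List ℕ) (hvals : ∀ x ∈ bids, x = 1 ∨ x = 2)
    {s₁ s₂ : ℕ} (hlen : bids.length ≤ s₁ + s₂) :
    winProb (scheduled bids) [s₁, s₂] bids.length
      = (zchoose (s₁ + s₂ - bids.length) (s₁ - bids.count 2) : ℚ) / (s₁ + s₂).choose s₁ := by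
  rw [winProb, countP_permutations_deckList_pair_scheduled bids hvals hlen, deckList_pair,
    length_append, length_replicate, length_replicate,
    ← Nat.choose_mul_factorial_mul_factorial (Nat.le_add_right s₁ s₂), add_tsub_cancel_left]
  have : ((s₁ + s₂).choose s₁ : ℚ) ≠ 0 :=
    Nat.cast_ne_zero.2 (Nat.choose_ne_zero (Nat.le_add_right s₁ s₂))
  push_cast
  field_simp

theorem stmt0_general (s₁ s₂ b₁ b₂ : ℕ) (hm : b₁ + b₂ ≤ s₁ + s₂)
    (bids : List ℕ) (hvals : ∀ x ∈ bids, x = 1 ∨ x = 2)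
    (hlen : bids.length = b₁ + b₂) (h2 : bids.count 2 = b₂) :
    winProb (fun hist => bids.getD hist.length 0) [s₁, s₂] (b₁ + b₂)
        = (zchoose (s₁ + s₂ - (b₁ + b₂)) ((s₁ : ℤ) - (b₂ : ℤ)) : ℚ)
            / ((s₁ + s₂).choose s₁ : ℚ) ∧
      (0 < winProb (fun hist => bids.getD hist.length 0) [s₁, s₂] (b₁ + b₂) ↔
        b₁ ≤ s₂ ∧ b₂ ≤ s₁) := by
  change winProb (scheduled bids) _ _ = _ ∧ (0 < winProb (scheduled bids) _ _ ↔ _)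
  have hwin := winProb_scheduled_pair bids hvals (hlen ▸ hm)
  rw [hlen, h2] at hwin
  refine ⟨hwin, ?_⟩
  have hchoose : (0 : ℚ) < (s₁ + s₂).choose s₁ := by
    exact_mod_cast Nat.choose_pos (Nat.le_add_right s₁ s₂)
  rw [hwin, div_pos_iff_of_pos_right hchoose, Nat.cast_pos, zchoose_pos_iff]
  omega

/-- Montmort two-value game with an advance schedule of bids: naming value 1 in `b₁`
rounds and value 2 in `b₂` rounds (in any order), the winning probability is
`C(s₁+s₂-b₁-b₂, s₁-b₂) / C(s₁+s₂, s₁)`; it is nonzero iff `b₁ ≤ s₂` and `b₂ ≤ s₁`. -/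
theorem stmt0 (s₁ s₂ b₁ b₂ : ℕ) (hs : s₂ ≤ s₁) (hm : b₁ + b₂ ≤ s₁ + s₂)
    (bids : List ℕ) (hvals : ∀ x ∈ bids, x = 1 ∨ x = 2)
    (hlen : bids.length = b₁ + b₂) (h1 : bids.count 1 = b₁) (h2 : bids.count 2 = b₂) :
    winProb (fun hist => bids.getD hist.length 0) [s₁, s₂] (b₁ + b₂)
        = (zchoose (s₁ + s₂ - (b₁ + b₂)) ((s₁ : ℤ) - (b₂ : ℤ)) : ℚ)
            / ((s₁ + s₂).choose s₁ : ℚ) ∧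
      (0 < winProb (fun hist => bids.getD hist.length 0) [s₁, s₂] (b₁ + b₂) ↔
        b₁ ≤ s₂ ∧ b₂ ≤ s₁) :=
  stmt0_general s₁ s₂ b₁ b₂ hm bids hvals hlen h2
end

section
/- Let q and s be non-increasing sequences of non-negative integers of the same length v with equal sums, such that s majorizes q (i.e., every partial sum of s is at least the corresponding partial sum of q). Define P(s,q) as the product over all indices i with sᵢ > qᵢ of the falling factorial sᵢ(sᵢ-1)⋯(qᵢ+1), with empty product equal to 1. Then P(q,s) ≤ P(s,q), with equality if and only if q = s. -/
/-!
Since `P(s,q) · ∏ qᵢ! = ∏ (max sᵢ qᵢ)! = P(q,s) · ∏ sᵢ!`, the claim is equivalent to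
`∏ qᵢ! < ∏ sᵢ!` whenever `q ≠ s`: the discrete Karamata inequality for the log-convex
function `n ↦ n!`. It is proved by Robin Hood transfers. Let `k` be the first index where
`s` and `q` differ (so `sₖ > qₖ`) and `l` the first index with `sₗ < qₗ`. Moving one unit
of `s` from `k` to `l` keeps `s` above `q` in the majorization order, because `s ≥ q`
entrywise on `[0, l)`, and since `sₗ < qₗ ≤ qₖ < sₖ` it multiplies `∏ sᵢ!` by
`(sₗ + 1) / sₖ < 1`. Each transfer lowers `∑ (sᵢ - qᵢ)⁺` by one, so the process reaches `q`.
-/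

open Finset
open scoped Nat

theorem Nat.factorial_succ_mul_factorial_lt {a b : ℕ} (h : a < b) :
    (a + 1)! * b ! < a ! * (b + 1)! := by
  rw [Nat.factorial_succ, Nat.factorial_succ, mul_assoc, mul_left_comm a !]
  exact Nat.mul_lt_mul_of_pos_right (by omega) (by positivity)

def transferUnit (f : ℕ → ℕ) (k l : ℕ) : ℕ → ℕ :=
  Function.update (Function.update f k (f k - 1)) l (f l + 1)

section TransferUnit

variable {f : ℕ → ℕ} {k l : ℕ}

theorem transferUnit_add_ite (hk : 0 < f k) (hkl : k ≠ l) (i : ℕ) :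
    transferUnit f k l i + (if i = k then 1 else 0) = f i + (if i = l then 1 else 0) := by
  unfold transferUnit
  rcases eq_or_ne i l with rfl | hil
  · simp [Ne.symm hkl]
  rcases eq_or_ne i k with rfl | hik
  · simp [hil, Nat.sub_add_cancel hk]
  · simp [hil, hik]

theorem sum_transferUnit_add_ite (hk : 0 < f k) (hkl : k ≠ l) (s : Finset ℕ) :
    ∑ i ∈ s, transferUnit f k l i + (if k ∈ s then 1 else 0) =
      ∑ i ∈ s, f i + (if l ∈ s then 1 else 0) := by
  have := Finset.sum_congr rfl fun i (_ : i ∈ s) => transferUnit_add_ite hk hkl i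
  simpa only [Finset.sum_add_distrib, Finset.sum_ite_eq'] using this

theorem prod_factorial_transferUnit_lt {s : Finset ℕ} (hk : k ∈ s) (hl : l ∈ s) (hkl : k ≠ l)
    (h : f l + 1 < f k) : ∏ i ∈ s, (transferUnit f k l i)! < ∏ i ∈ s, (f i)! := by
  have hl' : l ∈ s.erase k := mem_erase.mpr ⟨Ne.symm hkl, hl⟩
  have hrest : ∏ i ∈ (s.erase k).erase l, (transferUnit f k l i)! =
      ∏ i ∈ (s.erase k).erase l, (f i)! :=
    prod_congr rfl fun i hi => by
      obtain ⟨hil, hik, -⟩ : i ≠ l ∧ i ≠ k ∧ i ∈ s := by simpa using hi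
      simp [transferUnit, hil, hik]
  rw [← mul_prod_erase s _ hk, ← mul_prod_erase s (fun i => (f i)!) hk,
    ← mul_prod_erase _ _ hl', ← mul_prod_erase _ (fun i => (f i)!) hl', hrest,
    ← mul_assoc, ← mul_assoc]
  refine Nat.mul_lt_mul_of_pos_right ?_ (prod_pos fun i _ => Nat.factorial_pos _)
  have htk : transferUnit f k l k = f k - 1 := by simp [transferUnit, hkl]
  have htl : transferUnit f k l l = f l + 1 := by simp [transferUnit]
  rw [htk, htl, mul_comm, mul_comm (f k)!]
  have := Nat.factorial_succ_mul_factorial_lt (a := f l) (b := f k - 1) (by omega)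
  rwa [Nat.sub_add_cancel (by omega : 1 ≤ f k)] at this

end TransferUnit

section Majorization

variable {f g : ℕ → ℕ} {v : ℕ}

theorem exists_transfer_indices
    (hmaj : ∀ m ≤ v, ∑ i ∈ range m, g i ≤ ∑ i ∈ range m, f i)
    (hsum : ∑ i ∈ range v, g i = ∑ i ∈ range v, f i) (hne : ∃ i < v, f i ≠ g i) :
    ∃ k l, k < l ∧ l < v ∧ g k < f k ∧ f l < g l ∧
      ∀ m, k < m → m ≤ l → ∑ i ∈ range m, g i < ∑ i ∈ range m, f i := by
  classical
  obtain ⟨hkv, hk⟩ := Nat.find_spec hne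
  set k := Nat.find hne
  have hkmin : ∀ i < k, f i = g i := fun i hi => by
    simpa [hi.trans hkv] using Nat.find_min hne hi
  have hgk : g k < f k := by
    have hpre : ∑ i ∈ range k, g i = ∑ i ∈ range k, f i :=
      sum_congr rfl fun i hi => (hkmin i (mem_range.mp hi)).symm
    have := hmaj (k + 1) hkv
    rw [sum_range_succ, sum_range_succ, hpre] at this
    omega
  have hdef : ∃ l < v, f l < g l := by
    by_contra! hle
    exact hsum.not_lt (sum_lt_sum (fun i hi => hle i (mem_range.mp hi))
      ⟨k, mem_range.mpr hkv, hgk⟩)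
  obtain ⟨hlv, hl⟩ := Nat.find_spec hdef
  set l := Nat.find hdef
  have hlmin : ∀ i < l, g i ≤ f i := fun i hi => by
    simpa [hi.trans hlv] using Nat.find_min hdef hi
  have hkl : k < l := by
    by_contra! hlk
    rcases hlk.lt_or_eq with hlk | hlk
    · exact absurd (hkmin l hlk) hl.ne
    · rw [hlk] at hl; omega
  refine ⟨k, l, hkl, hlv, hgk, hl, fun m hkm hml => ?_⟩
  exact sum_lt_sum (fun i hi => hlmin i ((mem_range.mp hi).trans_le hml))
    ⟨k, mem_range.mpr hkm, hgk⟩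

theorem prod_factorial_lt_of_majorizes (hg : Antitone g)
    (hmaj : ∀ m ≤ v, ∑ i ∈ range m, g i ≤ ∑ i ∈ range m, f i)
    (hsum : ∑ i ∈ range v, g i = ∑ i ∈ range v, f i) (hne : ∃ i < v, f i ≠ g i) :
    ∏ i ∈ range v, (g i)! < ∏ i ∈ range v, (f i)! := by
  induction hD : ∑ i ∈ range v, (f i - g i) generalizing f with
  | zero =>
    obtain ⟨i, hiv, hi⟩ := hne
    have hle : ∀ i ∈ range v, f i ≤ g i := fun i hi => by
      have := (sum_eq_zero_iff.mp hD) i hi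
      omega
    exact absurd ((sum_eq_sum_iff_of_le hle).mp hsum.symm i (mem_range.mpr hiv)) hi
  | succ n ih =>
    obtain ⟨k, l, hkl, hlv, hgk, hfl, hgap⟩ := exists_transfer_indices hmaj hsum hne
    have hkl' : k ≠ l := hkl.ne
    have hk0 : 0 < f k := by omega
    have hsums := sum_transferUnit_add_ite hk0 hkl'
    have hmaj' : ∀ m ≤ v, ∑ i ∈ range m, g i ≤ ∑ i ∈ range m, transferUnit f k l i := by
      intro m hm
      have hm' := hsums (range m)
      have := hmaj m hm
      simp only [mem_range] at hm'
      split_ifs at hm' with hkm hlm hlm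
      · omega
      · have := hgap m hkm (by omega); omega
      · omega
      · omega
    have hsum' : ∑ i ∈ range v, g i = ∑ i ∈ range v, transferUnit f k l i := by
      have := hsums (range v)
      simp only [mem_range, hkl.trans hlv, hlv, if_true] at this
      omega
    have hD' : ∑ i ∈ range v, (transferUnit f k l i - g i) = n := by
      have hpt : ∀ i, (transferUnit f k l i - g i) + (if i = k then 1 else 0) = f i - g i := by
        intro i
        have := transferUnit_add_ite hk0 hkl' i
        split_ifs at this ⊢ with hik hil hil
        · omega
        · rw [hik] at this ⊢; omega
        · rw [hil] at this ⊢; omega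
        · omega
      have := sum_congr rfl fun i (_ : i ∈ range v) => hpt i
      rw [sum_add_distrib, sum_ite_eq', if_pos (mem_range.mpr (hkl.trans hlv)), hD] at this
      omega
    have hlt : ∏ i ∈ range v, (transferUnit f k l i)! < ∏ i ∈ range v, (f i)! :=
      prod_factorial_transferUnit_lt (mem_range.mpr (hkl.trans hlv)) (mem_range.mpr hlv) hkl'
        (by have := hg hkl.le; omega)
    by_cases hne' : ∃ i < v, transferUnit f k l i ≠ g i
    · exact (ih hmaj' hsum' hne' hD').trans hlt
    · push Not at hne'
      rwa [prod_congr rfl fun i hi => congrArg Nat.factorial (hne' i (mem_range.mp hi)).symm]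

end Majorization

namespace List

@[to_additive]
theorem prod_take_eq_prod_range_getD {M : Type*} [CommMonoid M] (l : List M) (m : ℕ) :
    (l.take m).prod = ∏ i ∈ Finset.range m, l.getD i 1 := by
  induction l generalizing m with
  | nil => simp
  | cons a t ih =>
    cases m with
    | zero => simp
    | succ m => rw [Finset.prod_range_succ']; simp [ih, mul_comm]

theorem prod_map_eq_prod_range_getD {α M : Type*} [CommMonoid M] (l : List α) (d : α)
    (f : α → M) : (l.map f).prod = ∏ i ∈ Finset.range l.length, f (l.getD i d) := by
  induction l with
  | nil => simp
  | cons a t ih => rw [length_cons, Finset.prod_range_succ']; simp [ih, mul_comm]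

theorem Pairwise.antitone_getD {α : Type*} [Preorder α] {l : List α} {d : α}
    (hl : l.Pairwise (· ≥ ·)) (hd : ∀ x ∈ l, d ≤ x) : Antitone (l.getD · d) := by
  intro i j hij
  show l.getD j d ≤ l.getD i d
  by_cases hj : j < l.length
  · have hi : i < l.length := hij.trans_lt hj
    simp only [getD_eq_getElem _ _ hi, getD_eq_getElem _ _ hj]
    rcases hij.lt_or_eq with hij | rfl
    · exact pairwise_iff_getElem.mp hl i j hi hj hij
    · exact le_rfl
  · rw [getD_eq_default _ _ (not_lt.mp hj)]
    by_cases hi : i < l.length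
    · rw [getD_eq_getElem _ _ hi]; exact hd _ (getElem_mem hi)
    · rw [getD_eq_default _ _ (not_lt.mp hi)]

end List

theorem prod_map_factorial_lt_of_majorizes {q s : List ℕ} (hlen : q.length = s.length)
    (hq : q.Pairwise (· ≥ ·)) (hsum : q.sum = s.sum) (hmaj : Majorizes s q) (hne : q ≠ s) :
    (q.map (·!)).prod < (s.map (·!)).prod := by
  rw [List.prod_map_eq_prod_range_getD q 0, List.prod_map_eq_prod_range_getD s 0, ← hlen]
  refine prod_factorial_lt_of_majorizes (hq.antitone_getD fun x _ => x.zero_le)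
    (fun m _ => ?_) ?_ ?_
  · simpa only [List.sum_take_eq_sum_range_getD] using hmaj m
  · rw [← List.sum_take_eq_sum_range_getD, ← List.sum_take_eq_sum_range_getD,
      List.take_length, hlen, List.take_length, hsum]
  · by_contra! h
    refine hne (List.ext_getElem hlen fun i hq hs => ?_)
    simpa [List.getD_eq_getElem, hq, hs] using (h i hq).symm

theorem Pfun_mul_prod_map_factorial {s q : List ℕ} (h : s.length = q.length) :
    Pfun s q * (q.map (·!)).prod = ((List.zipWith max s q).map (·!)).prod := by
  induction s generalizing q with
  | nil => cases q <;> simp_all [Pfun]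
  | cons a s ih =>
    cases q with
    | nil => simp at h
    | cons b q =>
      have hab : (if b < a then a ! / b ! else 1) * b ! = (max a b)! := by
        split_ifs with hba
        · rw [Nat.div_mul_cancel (Nat.factorial_dvd_factorial hba.le), max_eq_left hba.le]
        · rw [one_mul, max_eq_right (not_lt.mp hba)]
      simp only [Pfun, List.zipWith_cons_cons, List.prod_cons, List.map_cons] at ih ⊢
      rw [← hab, ← ih (by simpa using h)]
      ring

theorem Pfun_lt_of_prod_map_factorial_lt {s q : List ℕ} (h : s.length = q.length)
    (hlt : (q.map (·!)).prod < (s.map (·!)).prod) : Pfun q s < Pfun s q := by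
  have hsq := Pfun_mul_prod_map_factorial h
  have hqs := Pfun_mul_prod_map_factorial h.symm
  rw [List.zipWith_comm_of_comm Nat.max_comm, ← hsq] at hqs
  have hpos : 0 < Pfun q s := by
    have hM : 0 < ((List.zipWith max q s).map (·!)).prod :=
      List.prod_pos fun x hx => by
        obtain ⟨y, -, rfl⟩ := List.mem_map.mp hx
        exact Nat.factorial_pos y
    rw [← Pfun_mul_prod_map_factorial h.symm] at hM
    exact Nat.pos_of_mul_pos_right hM
  exact Nat.lt_of_mul_lt_mul_right (hqs ▸ Nat.mul_lt_mul_of_pos_left hlt hpos)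

theorem stmt2_general (v : ℕ) (q s : List ℕ) (hql : q.length = v) (hsl : s.length = v)
    (hqs : List.Pairwise (· ≥ ·) q)
    (hsum : q.sum = s.sum) (hmaj : Majorizes s q) :
    Pfun q s ≤ Pfun s q ∧ (q ≠ s → Pfun q s < Pfun s q) := by
  rcases eq_or_ne q s with rfl | hne
  · exact ⟨le_rfl, fun h => (h rfl).elim⟩
  have hlt := Pfun_lt_of_prod_map_factorial_lt (by rw [hql, hsl])
    (prod_map_factorial_lt_of_majorizes (hql.trans hsl.symm) hqs hsum hmaj hne)
  exact ⟨hlt.le, fun _ => hlt⟩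

/-- If `s` majorizes `q` (non-increasing, equal length and sum), then
`P(q,s) ≤ P(s,q)`, with equality iff `q = s`. -/
theorem stmt2 (v : ℕ) (q s : List ℕ) (hql : q.length = v) (hsl : s.length = v)
    (hqs : List.Pairwise (· ≥ ·) q) (hss : List.Pairwise (· ≥ ·) s)
    (hsum : q.sum = s.sum) (hmaj : Majorizes s q) :
    Pfun q s ≤ Pfun s q ∧ (q ≠ s → Pfun q s < Pfun s q) :=
  stmt2_general v q s hql hsl hqs hsum hmaj
end

section
/- Let s and q be non-increasing sequences of non-negative integers of length v with equal sums and s majorizing q, q ≠ s, and suppose there exists an index i ∈ [v-1] with s₁+⋯+sᵢ = q₁+⋯+qᵢ. Writing s = s'⌢s'' and q = q'⌢q'' split at position i, then s' majorizes q', s'' majorizes q'', and P(s,q) = P(s',q')·P(s'',q'') and P(q,s) = P(q',s')·P(q'',s''). -/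
theorem List.zipWith_eq_take_append_drop {α β γ : Type*} (f : α → β → γ) (a : List α)
    (b : List β) (i : ℕ) :
    List.zipWith f a b =
      List.zipWith f (a.take i) (b.take i) ++ List.zipWith f (a.drop i) (b.drop i) := by
  rw [← List.take_zipWith, ← List.drop_zipWith, List.take_append_drop]

theorem Pfun_eq_take_mul_drop (s q : List ℕ) (i : ℕ) :
    Pfun s q = Pfun (s.take i) (q.take i) * Pfun (s.drop i) (q.drop i) := by
  unfold Pfun
  rw [List.zipWith_eq_take_append_drop _ s q i, List.prod_append]

theorem Majorizes.take {s q : List ℕ} (h : Majorizes s q) (i : ℕ) :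
    Majorizes (s.take i) (q.take i) := by
  intro j
  simp only [List.take_take]
  exact h (min j i)

theorem Majorizes.drop {s q : List ℕ} (h : Majorizes s q) {i : ℕ}
    (heq : (s.take i).sum = (q.take i).sum) : Majorizes (s.drop i) (q.drop i) := by
  intro j
  have hij := h (i + j)
  rw [List.take_add, List.take_add, List.sum_append, List.sum_append, heq] at hij
  exact Nat.le_of_add_le_add_left hij

theorem stmt6_general (s q : List ℕ) (hmaj : Majorizes s q) (i : ℕ)
    (heq : (s.take i).sum = (q.take i).sum) :
    Majorizes (s.take i) (q.take i) ∧ Majorizes (s.drop i) (q.drop i) ∧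
      Pfun s q = Pfun (s.take i) (q.take i) * Pfun (s.drop i) (q.drop i) ∧
      Pfun q s = Pfun (q.take i) (s.take i) * Pfun (q.drop i) (s.drop i) :=
  ⟨hmaj.take i, hmaj.drop heq, Pfun_eq_take_mul_drop s q i, Pfun_eq_take_mul_drop q s i⟩

/-- Splitting a majorization pair at a position where the partial sums agree. -/
theorem stmt6 (v : ℕ) (s q : List ℕ) (hsl : s.length = v) (hql : q.length = v)
    (hss : List.Pairwise (· ≥ ·) s) (hqs : List.Pairwise (· ≥ ·) q)
    (hsum : s.sum = q.sum) (hmaj : Majorizes s q) (hne : q ≠ s)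
    (i : ℕ) (hi1 : 1 ≤ i) (hi2 : i ≤ v - 1)
    (heq : (s.take i).sum = (q.take i).sum) :
    Majorizes (s.take i) (q.take i) ∧ Majorizes (s.drop i) (q.drop i) ∧
      Pfun s q = Pfun (s.take i) (q.take i) * Pfun (s.drop i) (q.drop i) ∧
      Pfun q s = Pfun (q.take i) (s.take i) * Pfun (q.drop i) (s.drop i) :=
  stmt6_general s q hmaj i heq
end

section
/- Consider the m-round game on a deck of composition s = (s₁,…,s_v) with s₁ ≥ ⋯ ≥ s_v ≥ 1 and total c = Σsᵢ. The minimum winning probability over adaptive strategies is 0 if and only if m > c - s₁. -/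
/-
At most `s₁` cards of the deck carry any one value, and exactly `s₁` carry the value `1`.
If `m ≤ c - s₁`, then before each of the first `m` rounds more cards remain than copies of the
named value, so the dealer can always deal a different card; this builds an ordering of the deck
on which the given strategy survives. If `m > c - s₁`, the constant bid `1` loses on every
ordering, because the `c - s₁` other cards cannot fill the first `m` positions.
-/

lemma deckList_cons (x : ℕ) (s : List ℕ) :
    deckList (x :: s) = List.replicate x 1 ++ (deckList s).map (· + 1) := by
  simp [deckList, List.range_succ_eq_map, List.flatMap_map, List.map_flatMap,
    List.map_replicate]

lemma length_deckList (s : List ℕ) : (deckList s).length = s.sum := by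
  induction s with
  | nil => simp [deckList]
  | cons x s ih => simp [deckList_cons, ih]

lemma count_zero_deckList (s : List ℕ) : (deckList s).count 0 = 0 := by
  cases s with
  | nil => simp [deckList]
  | cons x s => simp [deckList_cons, List.count_replicate, List.count_eq_zero]

lemma count_succ_deckList (s : List ℕ) (i : ℕ) : (deckList s).count (i + 1) = s.getD i 0 := by
  induction s generalizing i with
  | nil => simp [deckList]
  | cons x s ih =>
    rw [deckList_cons, List.count_append,
      List.count_map_of_injective _ _ (add_left_injective 1)]
    cases i with
    | zero => simp [count_zero_deckList]
    | succ i => simp [List.count_replicate, ih]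

lemma getD_le_head_of_pairwise_ge {s : List ℕ} (hs : s.Pairwise (· ≥ ·)) (i : ℕ) :
    s.getD i 0 ≤ s.getD 0 0 := by
  rcases lt_or_ge i s.length with hi | hi
  · rcases i.eq_zero_or_pos with rfl | hi0
    · rfl
    · simpa [List.getD_eq_getElem?_getD, hi, hi0.trans hi]
        using List.pairwise_iff_getElem.mp hs 0 i (hi0.trans hi) hi hi0
  · simp [List.getD_eq_getElem?_getD, hi]

lemma count_deckList_le_head {s : List ℕ} (hs : s.Pairwise (· ≥ ·)) (a : ℕ) :
    (deckList s).count a ≤ s.getD 0 0 := by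
  cases a with
  | zero => simp [count_zero_deckList]
  | succ i => rw [count_succ_deckList]; exact getD_le_head_of_pairwise_ge hs i

lemma winProb_eq_zero_iff (strat : List ℕ → ℕ) (s : List ℕ) (m : ℕ) :
    winProb strat s m = 0 ↔ ∀ d, d.Perm (deckList s) → winsAux strat [] m d = false := by
  simp [winProb, Nat.factorial_ne_zero, List.countP_eq_zero, List.mem_permutations]

lemma exists_perm_winsAux_of_count_add_le (strat : List ℕ → ℕ) (hist : List ℕ) (m : ℕ)
    (l : List ℕ) (hl : ∀ a, l.count a + m ≤ l.length) :
    ∃ d, d.Perm l ∧ winsAux strat hist m d = true := by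
  induction m generalizing hist l with
  | zero => exact ⟨l, List.Perm.refl l, by simp [winsAux]⟩
  | succ m ih =>
    obtain ⟨x, hx, hxb⟩ : ∃ x ∈ l, strat hist ≠ x := by
      by_contra! h
      have := hl (strat hist)
      rw [List.count_eq_length.mpr h] at this
      omega
    have hl' : ∀ a, (l.erase x).count a + m ≤ (l.erase x).length := fun a => by
      have := (List.erase_sublist (a := x) (l := l)).count_le a
      rw [List.length_erase_of_mem hx]
      have := hl a
      omega
    obtain ⟨d, hd, hwin⟩ := ih (hist ++ [x]) (l.erase x) hl'
    exact ⟨x :: d, (hd.cons x).trans (List.perm_cons_erase hx).symm, by simp [winsAux, hxb, hwin]⟩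

lemma mem_take_of_length_sub_lt_count {α : Type*} [DecidableEq α] (d : List α) (a : α) (m : ℕ)
    (h : d.length - m < d.count a) : a ∈ d.take m := by
  by_contra hmem
  have hsplit := List.count_append (a := a) (l₁ := d.take m) (l₂ := d.drop m)
  rw [List.take_append_drop, List.count_eq_zero.mpr hmem] at hsplit
  have := (List.count_le_length (a := a) (l := d.drop m)).trans_eq (List.length_drop ..)
  omega

lemma winsAux_const_eq_false_of_mem_take (b m : ℕ) (hist d : List ℕ) (hb : b ∈ d.take m) :
    winsAux (fun _ => b) hist m d = false := by
  induction m generalizing hist d with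
  | zero => simp at hb
  | succ m ih =>
    cases d with
    | nil => simp at hb
    | cons x rest =>
      simp only [List.take_succ_cons, List.mem_cons] at hb
      rcases hb with rfl | hb
      · simp [winsAux]
      · simp [winsAux, ih (hist ++ [x]) rest hb]

theorem stmt8_general (m : ℕ) (s : List ℕ)
    (hss : List.Pairwise (· ≥ ·) s)
    (c : ℕ) (hc : c = s.sum) (hm : m ≤ c) :
    (∃ strat : List ℕ → ℕ, winProb strat s m = 0) ↔ c - s.getD 0 0 < m := by
  have hlen : (deckList s).length = c := by rw [length_deckList, hc]
  have hcount : (deckList s).count 1 = s.getD 0 0 := count_succ_deckList s 0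
  have hhead : s.getD 0 0 ≤ c := hcount ▸ hlen ▸ List.count_le_length
  constructor
  · rintro ⟨strat, hzero⟩
    by_contra! hle
    obtain ⟨d, hd, hwin⟩ := exists_perm_winsAux_of_count_add_le strat [] m (deckList s)
      fun a => by have := count_deckList_le_head hss a; omega
    rw [(winProb_eq_zero_iff strat s m).mp hzero d hd] at hwin
    exact Bool.false_ne_true hwin
  · intro hlt
    refine ⟨fun _ => 1, (winProb_eq_zero_iff _ s m).mpr fun d hd => ?_⟩
    apply winsAux_const_eq_false_of_mem_take
    apply mem_take_of_length_sub_lt_count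
    rw [hd.length_eq, hd.count_eq, hlen, hcount]
    omega

/-- The minimum winning probability over adaptive strategies is `0` iff `m > c - s₁`. -/
theorem stmt8 (v m : ℕ) (s : List ℕ) (hsl : s.length = v)
    (hss : List.Pairwise (· ≥ ·) s) (hpos : ∀ x ∈ s, 1 ≤ x)
    (c : ℕ) (hc : c = s.sum) (hm : m ≤ c) :
    (∃ strat : List ℕ → ℕ, winProb strat s m = 0) ↔ c - s.getD 0 0 < m :=
  stmt8_general m s hss c hc hm
end
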